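/- arXiv:1711.05461 — 2 statements merged into one kernel-verified Lean document; each statement's English description precedes it below -/
import Mathlib

section
/- Let Φ: 𝕋 → 𝕋 be a C¹ diffeomorphism with Φ' ≥ 1-ρ > 0 and ∫|Φ''| dλ ≤ ρ for some 0 < ρ < 1, and let f be a C¹ probability density on 𝕋. Then the pushforward density P_Φ f = (f/Φ')∘Φ⁻¹ satisfies var(P_Φ f) ≤ var(f)/(1-ρ)² + ρ/(1-ρ)². -/
open MeasureTheory Function Set

/-- The sawtooth interaction function `g` on the circle, lifted 1-periodically to `ℝ`:
`g(u) = u` for `u ∈ (-1/2, 1/2)` and `g(±1/2) = 0`. -/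
noncomputable def saw (u : ℝ) : ℝ :=
  if Int.fract (u + 1/2) = 0 then 0 else u - (round u : ℤ)

/-- The lift of the diffusive coupling map `Φ_f(x) = x + ε ∫ g(y-x) f(y) dy`. -/
noncomputable def Phi (ε : ℝ) (f : ℝ → ℝ) (x : ℝ) : ℝ :=
  x + ε * ∫ y in (0:ℝ)..1, saw (y - x) * f y

/-- Property (F): `f` is a C¹ probability density on the circle (1-periodic on `ℝ`). -/
def PropF (f : ℝ → ℝ) : Prop :=
  ContDiff ℝ 1 f ∧ Function.Periodic f 1 ∧ (∀ x, 0 ≤ f x) ∧ (∫ x in (0:ℝ)..1, f x) = 1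

/-- `f'` is Lipschitz. -/
def LipDeriv (f : ℝ → ℝ) : Prop := ∃ L : ℝ, ∀ x y, |deriv f x - deriv f y| ≤ L * |x - y|

/-- Total variation over one period, for C¹ functions. -/
noncomputable def tvar (f : ℝ → ℝ) : ℝ := ∫ x in (0:ℝ)..1, |deriv f x|

/-- L¹ norm over one period. -/
noncomputable def l1 (f : ℝ → ℝ) : ℝ := ∫ x in (0:ℝ)..1, |f x|

/-- BV norm for C¹ functions. -/
noncomputable def bv (f : ℝ → ℝ) : ℝ := l1 f + tvar f

/-- Transfer (Perron–Frobenius) operator of an `N`-fold covering map given by its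
(bijective, strictly monotone) lift `F : ℝ → ℝ`. -/
noncomputable def transfer (F : ℝ → ℝ) (N : ℕ) (u : ℝ → ℝ) (y : ℝ) : ℝ :=
  ∑ k ∈ Finset.range N,
    u (Function.invFun F (y + k)) / |deriv F (Function.invFun F (y + k))|

/-- Property (T): `T` is (the lift of) a C² `N`-fold covering expanding circle map with
`min |T'| = ω > 1`, `T''` Lipschitz, `N < ω²`. -/
def PropT (T : ℝ → ℝ) (N : ℕ) (ω : ℝ) : Prop :=
  ContDiff ℝ 2 T ∧
  ((∀ x, T (x + 1) = T x + N) ∨ (∀ x, T (x + 1) = T x - N)) ∧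
  (∀ x, ω ≤ |deriv T x|) ∧ 1 < ω ∧
  (∃ L : ℝ, ∀ x y, |deriv (deriv T) x - deriv (deriv T) y| ≤ L * |x - y|) ∧
  (N : ℝ) < ω ^ 2

/-- The self-consistent transfer operator `F_ε(f) = P_{T ∘ Φ_f} f`. -/
noncomputable def Feps (T : ℝ → ℝ) (N : ℕ) (ε : ℝ) (f : ℝ → ℝ) : ℝ → ℝ :=
  transfer (T ∘ Phi ε f) N f

/-- The class `C_{R,S}^c` of densities. -/
def CRSc (R S c : ℝ) : Set (ℝ → ℝ) :=
  {f | PropF f ∧ tvar f ≤ R ∧ (∀ x, |deriv f x| ≤ S) ∧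
    ∀ x y, |deriv f x - deriv f y| ≤ c * |x - y|}

/-- Property (F'): `f` satisfies (F), has Lipschitz derivative, and its support avoids
(an interval of length `1/2` on the circle, i.e.) all integer translates of some `[a, a+1/2]`. -/
def PropF' (f : ℝ → ℝ) : Prop :=
  PropF f ∧ LipDeriv f ∧
    ∃ a : ℝ, ∀ x, f x ≠ 0 → ∀ k : ℤ, x + (k : ℝ) ∉ Set.Icc a (a + 1/2)

/-- The length of the minimal closed arc of the circle containing the support of `f`. -/
noncomputable def suppLen (f : ℝ → ℝ) : ℝ :=
  sInf {L | 0 ≤ L ∧ ∃ a : ℝ, ∀ x, f x ≠ 0 → ∃ k : ℤ, x + (k : ℝ) ∈ Set.Icc a (a + L)}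

/-- Wasserstein-1 distance between the measure `f dλ` on the circle and the point mass `δ_y`,
via Kantorovich–Rubinstein duality (1-Lipschitz periodic test functions). -/
noncomputable def W1delta (f : ℝ → ℝ) (y : ℝ) : ℝ :=
  ⨆ ℓ : {ℓ : ℝ → ℝ // LipschitzWith 1 ℓ ∧ Function.Periodic ℓ 1},
    |(∫ x in (0:ℝ)..1, ℓ.1 x * f x) - ℓ.1 y|

/-- BV norm for (not necessarily C¹) functions of bounded variation. -/
noncomputable def bvBV (u : ℝ → ℝ) : ℝ :=
  l1 u + (eVariationOn u (Set.Icc (0:ℝ) 1)).toReal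

/-!
With `ψ = Φ⁻¹` we have `P_Φ f = h ∘ ψ` for `h = f / Φ'`. The substitution `y = Φ x` turns
`∫ |(h ∘ ψ)'|` over a period into `∫ |h'|` over a period, and
`h' = f' / Φ' - f Φ'' / Φ'²` is bounded by `|f'| / (1 - ρ) + (sup f) |Φ''| / (1 - ρ)²`.
A probability density satisfies `sup f ≤ 1 + var f`, and the two resulting terms add up to
`(var f + ρ) / (1 - ρ)²`.
-/

open scoped Interval

theorem Function.Periodic.deriv {𝕜 F : Type*} [NontriviallyNormedField 𝕜] [NormedAddCommGroup F]
    [NormedSpace 𝕜 F] {f : 𝕜 → F} {c : 𝕜} (hf : Periodic f c) : Periodic (deriv f) c :=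
  fun x => by rw [← deriv_comp_add_const, hf.funext]

theorem periodic_deriv_of_map_add_const {𝕜 F : Type*} [NontriviallyNormedField 𝕜]
    [NormedAddCommGroup F] [NormedSpace 𝕜 F] {Φ : 𝕜 → F} {c : 𝕜} {d : F}
    (h : ∀ x, Φ (x + c) = Φ x + d) : Periodic (deriv Φ) c :=
  fun x => by rw [← deriv_comp_add_const, funext h, deriv_add_const]

theorem surjective_of_map_add_one {Φ : ℝ → ℝ} (hcont : Continuous Φ) (hmono : Monotone Φ)
    (hper : ∀ x, Φ (x + 1) = Φ x + 1) : Surjective Φ :=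
  (CircleDeg1Lift.continuous_iff_surjective ⟨⟨Φ, hmono⟩, hper⟩).1 hcont

theorem StrictMono.continuous_invFun {Φ : ℝ → ℝ} (hmono : StrictMono Φ) (hsurj : Surjective Φ) :
    Continuous (invFun Φ) := by
  have : invFun Φ = (hmono.orderIsoOfSurjective Φ hsurj).symm :=
    funext fun y => hmono.injective <| by
      rw [invFun_eq (hsurj y)]
      exact ((hmono.orderIsoOfSurjective Φ hsurj).apply_symm_apply y).symm
  exact this ▸ OrderIso.continuous _

theorem hasDerivAt_invFun_of_deriv_pos {Φ : ℝ → ℝ} (hΦ : Differentiable ℝ Φ)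
    (hΦ' : ∀ x, 0 < deriv Φ x) (hsurj : Surjective Φ) (y : ℝ) :
    HasDerivAt (invFun Φ) (deriv Φ (invFun Φ y))⁻¹ y :=
  (hΦ _).hasDerivAt.of_local_left_inverse
    ((strictMono_of_deriv_pos hΦ').continuous_invFun hsurj).continuousAt (hΦ' _).ne'
    (.of_forall fun y => invFun_eq (hsurj y))

theorem transfer_one_eq_comp_invFun {Φ : ℝ → ℝ} (hΦ' : ∀ x, 0 < deriv Φ x) (f : ℝ → ℝ) :
    transfer Φ 1 f = (fun x => f x / deriv Φ x) ∘ invFun Φ := by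
  funext y
  simp [transfer, abs_of_pos (hΦ' _)]

theorem integral_abs_deriv_comp_invFun {Φ h : ℝ → ℝ} (hΦ : ContDiff ℝ 1 Φ)
    (hΦ' : ∀ x, 0 < deriv Φ x) (hsurj : Surjective Φ) (hh : ContDiff ℝ 1 h) (a b : ℝ) :
    ∫ y in Φ a..Φ b, |deriv (h ∘ invFun Φ) y| = ∫ x in a..b, |deriv h x| := by
  have hΦd := hΦ.differentiable one_ne_zero
  have hderiv : deriv (h ∘ invFun Φ) = fun y => deriv h (invFun Φ y) / deriv Φ (invFun Φ y) :=
    funext fun y => ((hh.differentiable one_ne_zero _).hasDerivAt.comp y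
      (hasDerivAt_invFun_of_deriv_pos hΦd hΦ' hsurj y)).deriv
  have hψ := (strictMono_of_deriv_pos hΦ').continuous_invFun hsurj
  have hcont : Continuous fun y => |deriv h (invFun Φ y) / deriv Φ (invFun Φ y)| :=
    (((hh.continuous_deriv le_rfl).comp hψ).div ((hΦ.continuous_deriv le_rfl).comp hψ)
      fun y => (hΦ' _).ne').abs
  rw [hderiv, ← intervalIntegral.integral_comp_mul_deriv (fun x _ => (hΦd x).hasDerivAt)
    (hΦ.continuous_deriv le_rfl).continuousOn hcont]
  refine intervalIntegral.integral_congr fun x _ => ?_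
  have hx := hΦ' x
  simp only [comp_apply, leftInverse_invFun (strictMono_of_deriv_pos hΦ').injective x, abs_div,
    abs_of_pos hx]
  field_simp

theorem le_intervalAverage_add_integral_abs_deriv {f : ℝ → ℝ} {a b x : ℝ} (hf : ContDiff ℝ 1 f)
    (hab : a < b) (hx : x ∈ Icc a b) :
    f x ≤ (⨍ y in a..b, f y) + ∫ y in a..b, |deriv f y| := by
  have hvol : volume (Ι a b) ≠ 0 := by simp [uIoc_of_le hab.le, hab]
  obtain ⟨x₀, hx₀, hmin⟩ := exists_le_setAverage hvol (by simp [uIoc_of_le hab.le])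
    (hf.continuous.integrableOn_uIoc (a := a) (b := b))
  have hsub : Ι x₀ x ⊆ Ι a b := by
    refine uIoc_subset_uIoc_of_uIcc_subset_uIcc (uIcc_subset_uIcc ?_ ?_)
    · rw [uIoc_of_le hab.le] at hx₀
      exact Icc_subset_uIcc (Ioc_subset_Icc_self hx₀)
    · exact Icc_subset_uIcc hx
  have hf' := hf.continuous_deriv le_rfl
  have hdiff : f x - f x₀ ≤ ∫ y in a..b, |deriv f y| :=
    calc f x - f x₀ = ∫ y in x₀..x, deriv f y :=
          (intervalIntegral.integral_deriv_eq_sub (fun y _ => hf.differentiable one_ne_zero y)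
            (hf'.intervalIntegrable _ _)).symm
      _ ≤ |(∫ y in x₀..x, |deriv f y|)| :=
          (le_abs_self _).trans <| by
            simpa only [Real.norm_eq_abs] using
              intervalIntegral.norm_integral_le_abs_integral_norm (f := deriv f)
      _ ≤ |(∫ y in a..b, |deriv f y|)| := intervalIntegral.abs_integral_mono_interval hsub
          (.of_forall fun _ => abs_nonneg _) (hf'.abs.intervalIntegrable _ _)
      _ = ∫ y in a..b, |deriv f y| :=
          abs_of_nonneg (intervalIntegral.integral_nonneg hab.le fun _ _ => abs_nonneg _)
  linarith

theorem abs_deriv_div_le {f g : ℝ → ℝ} {x c M : ℝ} (hf : DifferentiableAt ℝ f x)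
    (hg : DifferentiableAt ℝ g x) (hc : 0 < c) (hgc : c ≤ g x) (hfM : |f x| ≤ M) :
    |deriv (fun y => f y / g y) x| ≤ |deriv f x| / c + M * |deriv g x| / c ^ 2 := by
  have hg0 : 0 < g x := hc.trans_le hgc
  have hM : 0 ≤ M := (abs_nonneg _).trans hfM
  rw [deriv_fun_div hf hg hg0.ne']
  calc |(deriv f x * g x - f x * deriv g x) / g x ^ 2|
      ≤ (|deriv f x| * g x + |f x| * |deriv g x|) / g x ^ 2 := by
        rw [abs_div, abs_of_pos (by positivity : 0 < g x ^ 2)]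
        gcongr
        refine (abs_sub _ _).trans_eq ?_
        rw [abs_mul, abs_mul, abs_of_pos hg0]
    _ = |deriv f x| / g x + |f x| * |deriv g x| / g x ^ 2 := by field_simp
    _ ≤ |deriv f x| / c + M * |deriv g x| / c ^ 2 := by gcongr

theorem integral_abs_deriv_div_le {f g : ℝ → ℝ} {a b c M : ℝ} (hab : a ≤ b)
    (hf : ContDiff ℝ 1 f) (hg : ContDiff ℝ 1 g) (hc : 0 < c) (hgc : ∀ x, c ≤ g x)
    (hfM : ∀ x ∈ Icc a b, |f x| ≤ M) :
    ∫ x in a..b, |deriv (fun y => f y / g y) x|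
      ≤ (∫ x in a..b, |deriv f x|) / c + M * (∫ x in a..b, |deriv g x|) / c ^ 2 := by
  have hf' := hf.continuous_deriv le_rfl
  have hg' := hg.continuous_deriv le_rfl
  have hquot : ContDiff ℝ 1 fun y => f y / g y :=
    hf.div hg fun x => (hc.trans_le (hgc x)).ne'
  calc ∫ x in a..b, |deriv (fun y => f y / g y) x|
      ≤ ∫ x in a..b, (|deriv f x| / c + M * |deriv g x| / c ^ 2) :=
        intervalIntegral.integral_mono_on hab
          ((hquot.continuous_deriv le_rfl).abs.intervalIntegrable _ _)
          (Continuous.intervalIntegrable (by fun_prop) _ _)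
          fun x hx => abs_deriv_div_le (hf.differentiable one_ne_zero x)
            (hg.differentiable one_ne_zero x) hc (hgc x) (hfM x hx)
    _ = _ := by
      rw [intervalIntegral.integral_add (Continuous.intervalIntegrable (by fun_prop) _ _)
        (Continuous.intervalIntegrable (by fun_prop) _ _),
        intervalIntegral.integral_div, intervalIntegral.integral_div,
        intervalIntegral.integral_const_mul]

theorem tvar_transfer_one_eq {Φ f : ℝ → ℝ} (hΦ : ContDiff ℝ 2 Φ)
    (hper : ∀ x, Φ (x + 1) = Φ x + 1) (hΦ' : ∀ x, 0 < deriv Φ x) (hf : ContDiff ℝ 1 f)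
    (hfper : Periodic f 1) :
    tvar (transfer Φ 1 f) = tvar fun x => f x / deriv Φ x := by
  have hΦ1 : ContDiff ℝ 1 Φ := hΦ.of_le one_le_two
  have hsurj := surjective_of_map_add_one hΦ1.continuous (strictMono_of_deriv_pos hΦ').monotone hper
  obtain ⟨a, ha⟩ := hsurj 0
  have hquot : ContDiff ℝ 1 fun x => f x / deriv Φ x :=
    hf.div hΦ.deriv' fun x => (hΦ' x).ne'
  have hquot_per : Periodic (fun x => f x / deriv Φ x) 1 := fun x => by
    simp only [hfper x, periodic_deriv_of_map_add_const hper x]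
  calc tvar (transfer Φ 1 f)
      = ∫ y in Φ a..Φ (a + 1), |deriv ((fun x => f x / deriv Φ x) ∘ invFun Φ) y| := by
        rw [transfer_one_eq_comp_invFun hΦ', hper, ha, zero_add]; rfl
    _ = ∫ x in a..a + 1, |deriv (fun x => f x / deriv Φ x) x| :=
        integral_abs_deriv_comp_invFun hΦ1 hΦ' hsurj hquot a (a + 1)
    _ = tvar fun x => f x / deriv Φ x := by
        simpa [tvar] using (hquot_per.deriv.comp abs).intervalIntegral_add_eq a 0

theorem pushforward_var_bound_general (Φ : ℝ → ℝ) (ρ : ℝ) (hρ1 : ρ < 1)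
    (hΦ : ContDiff ℝ 2 Φ) (hper : ∀ x, Φ (x + 1) = Φ x + 1)
    (hder : ∀ x, 1 - ρ ≤ deriv Φ x)
    (hsec : (∫ x in (0:ℝ)..1, |deriv (deriv Φ) x|) ≤ ρ)
    (f : ℝ → ℝ) (hf : PropF f) :
    tvar (transfer Φ 1 f) ≤ tvar f / (1 - ρ) ^ 2 + ρ / (1 - ρ) ^ 2 := by
  obtain ⟨hfC, hfper, hfpos, hfint⟩ := hf
  have hc : 0 < 1 - ρ := sub_pos.2 hρ1
  have hsup : ∀ x ∈ Icc (0 : ℝ) 1, |f x| ≤ 1 + tvar f := fun x hx => by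
    have := le_intervalAverage_add_integral_abs_deriv hfC one_pos hx
    rw [interval_average_eq, hfint] at this
    simpa [abs_of_nonneg (hfpos x), tvar] using this
  have htvar : 0 ≤ tvar f := intervalIntegral.integral_nonneg zero_le_one fun _ _ => abs_nonneg _
  calc tvar (transfer Φ 1 f) = tvar fun x => f x / deriv Φ x :=
        tvar_transfer_one_eq hΦ hper (fun x => hc.trans_le (hder x)) hfC hfper
    _ ≤ tvar f / (1 - ρ) + (1 + tvar f) * (∫ x in (0:ℝ)..1, |deriv (deriv Φ) x|) / (1 - ρ) ^ 2 :=
        integral_abs_deriv_div_le zero_le_one hfC hΦ.deriv' hc hder hsup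
    _ ≤ tvar f / (1 - ρ) + (1 + tvar f) * ρ / (1 - ρ) ^ 2 := by gcongr
    _ = tvar f / (1 - ρ) ^ 2 + ρ / (1 - ρ) ^ 2 := by field_simp; ring

/-- variation bound for the pushforward by a circle diffeomorphism `Φ` with
`Φ' ≥ 1 - ρ > 0` and `∫|Φ''| ≤ ρ`:
`var(P_Φ f) ≤ var(f)/(1-ρ)² + ρ/(1-ρ)²`. -/
theorem pushforward_var_bound (Φ : ℝ → ℝ) (ρ : ℝ) (hρ0 : 0 < ρ) (hρ1 : ρ < 1)
    (hΦ : ContDiff ℝ 2 Φ) (hper : ∀ x, Φ (x + 1) = Φ x + 1)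
    (hder : ∀ x, 1 - ρ ≤ deriv Φ x)
    (hsec : (∫ x in (0:ℝ)..1, |deriv (deriv Φ) x|) ≤ ρ)
    (f : ℝ → ℝ) (hf : PropF f) :
    tvar (transfer Φ 1 f) ≤ tvar f / (1 - ρ) ^ 2 + ρ / (1 - ρ) ^ 2 :=
  pushforward_var_bound_general Φ ρ hρ1 hΦ hper hder hsec f hf
end

section
/- (Support monotonicity of the coupling.) If f is a C¹ probability density on 𝕋 whose support is contained in a closed arc of length < 1/2, then supp*(P_{Φ_f} f) ⊆ supp*(f), i.e., the coupling map Φ_f maps the minimal closed supporting arc of f into itself. -/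
open MeasureTheory Function Set

/-!
For every `x`, `Φ_f(x) - x = ε (M_x - x)`, where `M_x` is the barycenter of `f` on the
window `[x - 1/2, x + 1/2]`, on which the sawtooth is the identity. For `x ∈ [a, b]` the only
part of the support of `f` in that window is the one in `[a, b]` itself (as `b - a < 1/2`), so
`M_x ∈ [a, b]` and `Φ_f(x)` is a convex combination of `x` and `M_x`. For the transfer operator:
`Φ_f` commutes with integer translations and moves points by at most `ε/2`, so it is onto, and
a point where `P_{Φ_f} f ≠ 0` is the image of a point of the support of `f`, which an integer
translation puts in `[a, b]`.
-/

lemma saw_of_mem_Ioo {u : ℝ} (hu : u ∈ Ioo (-(1/2)) (1/2)) : saw u = u := by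
  have hfract : Int.fract (u + 1/2) = u + 1/2 :=
    Int.fract_eq_self.2 ⟨by linarith [hu.1], by linarith [hu.2]⟩
  have hround : round u = 0 := by
    rw [round_eq]
    exact Int.floor_eq_zero_iff.2 ⟨by linarith [hu.1], by linarith [hu.2]⟩
  rw [saw, hfract, if_neg (by linarith [hu.1]), hround]
  simp

lemma saw_periodic : Periodic saw 1 := by
  intro u
  rw [saw, saw, add_right_comm, Int.fract_add_one, round_add_one]
  push_cast
  ring_nf

lemma Phi_add_intCast (ε : ℝ) (f : ℝ → ℝ) (x : ℝ) (k : ℤ) :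
    Phi ε f (x + k) = Phi ε f x + k := by
  have hsaw : ∀ y, saw (y - (x + k)) = saw (y - x) := fun y => by
    simpa [sub_add_eq_sub_sub] using saw_periodic.sub_int_mul_eq (x := y - x) k
  simp only [Phi, hsaw]
  ring

lemma integral_saw_mul_eq {f : ℝ → ℝ} (hper : Periodic f 1) (x : ℝ) :
    ∫ y in (0:ℝ)..1, saw (y - x) * f y = ∫ y in (x - 1/2)..(x + 1/2), (y - x) * f y := by
  have hshift : Periodic (fun y => saw (y - x) * f y) 1 := fun y => by
    simp only [add_sub_right_comm, saw_periodic _, hper y]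
  have hwindow := hshift.intervalIntegral_add_eq 0 (x - 1/2)
  rw [zero_add, show x - 1/2 + 1 = x + 1/2 by ring] at hwindow
  rw [hwindow]
  -- the sawtooth differs from `y ↦ y - x` on the window only at its right end
  refine intervalIntegral.integral_congr_ae ?_
  filter_upwards [measure_eq_zero_iff_ae_notMem.1 (measure_singleton (x + 1/2))] with y hy hmem
  rw [uIoc_of_le (by linarith)] at hmem
  have hlt : y < x + 1/2 := lt_of_le_of_ne (by linarith [hmem.2]) hy
  rw [saw_of_mem_Ioo ⟨by linarith [hmem.1], by linarith⟩]

lemma integral_id_mul_mem_Icc {f : ℝ → ℝ} {s t a b : ℝ} (hst : s ≤ t)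
    (hf : IntervalIntegrable f volume s t) (hpos : ∀ y ∈ Icc s t, 0 ≤ f y)
    (hmass : ∫ y in s..t, f y = 1) (hsupp : ∀ y ∈ Icc s t, f y ≠ 0 → y ∈ Icc a b) :
    ∫ y in s..t, y * f y ∈ Icc a b := by
  have hyf : IntervalIntegrable (fun y => y * f y) volume s t :=
    hf.continuousOn_mul continuousOn_id
  have hbounds : ∀ y ∈ Icc s t, a * f y ≤ y * f y ∧ y * f y ≤ b * f y := by
    intro y hy
    by_cases hfy : f y = 0
    · simp [hfy]
    · obtain ⟨hay, hyb⟩ := hsupp y hy hfy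
      exact ⟨mul_le_mul_of_nonneg_right hay (hpos y hy),
        mul_le_mul_of_nonneg_right hyb (hpos y hy)⟩
  have hconst : ∀ c : ℝ, ∫ y in s..t, c * f y = c := fun c => by
    rw [intervalIntegral.integral_const_mul, hmass, mul_one]
  constructor
  · calc a = ∫ y in s..t, a * f y := (hconst a).symm
      _ ≤ ∫ y in s..t, y * f y :=
        intervalIntegral.integral_mono_on hst (hf.const_mul a) hyf fun y hy => (hbounds y hy).1
  · calc ∫ y in s..t, y * f y ≤ ∫ y in s..t, b * f y :=
          intervalIntegral.integral_mono_on hst hyf (hf.const_mul b) fun y hy => (hbounds y hy).2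
      _ = b := hconst b

lemma surjective_of_continuous_of_abs_sub_le {F : ℝ → ℝ} (hF : Continuous F) {C : ℝ}
    (hC : ∀ x, |F x - x| ≤ C) : Surjective F := by
  refine hF.surjective ?_ ?_
  · refine Filter.tendsto_atTop_mono (fun x => ?_)
      (Filter.tendsto_atTop_add_const_right _ (-C) Filter.tendsto_id)
    dsimp only [id]
    linarith [(abs_le.1 (hC x)).1]
  · refine Filter.tendsto_atBot_mono (fun x => ?_)
      (Filter.tendsto_atBot_add_const_right _ C Filter.tendsto_id)
    dsimp only [id]
    linarith [(abs_le.1 (hC x)).2]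

lemma transfer_one_ne_zero {F u : ℝ → ℝ} {y : ℝ} (h : transfer F 1 u y ≠ 0) :
    u (invFun F y) ≠ 0 := by
  simp only [transfer, Finset.sum_range_one, Nat.cast_zero, add_zero] at h
  exact (div_ne_zero_iff.1 h).1

namespace PropF

variable {f : ℝ → ℝ}

lemma intervalIntegrable_id_mul (hf : PropF f) (s t : ℝ) :
    IntervalIntegrable (fun y => y * f y) volume s t :=
  (continuous_id.mul hf.1.continuous).intervalIntegrable s t

lemma integral_window (hf : PropF f) (x : ℝ) : ∫ y in (x - 1/2)..(x + 1/2), f y = 1 := by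
  rw [show x + 1/2 = x - 1/2 + 1 by ring, ← hf.2.1.intervalIntegral_add_eq 0, zero_add]
  exact hf.2.2.2

lemma barycenter_mem_Icc (hf : PropF f) {x a b : ℝ}
    (hsupp : ∀ y ∈ Icc (x - 1/2) (x + 1/2), f y ≠ 0 → y ∈ Icc a b) :
    ∫ y in (x - 1/2)..(x + 1/2), y * f y ∈ Icc a b :=
  integral_id_mul_mem_Icc (by linarith) (hf.1.continuous.intervalIntegrable _ _)
    (fun y _ => hf.2.2.1 y) (hf.integral_window x) hsupp

lemma Phi_eq (hf : PropF f) (ε x : ℝ) :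
    Phi ε f x = x + ε * ((∫ y in (x - 1/2)..(x + 1/2), y * f y) - x) := by
  have hlin : ∫ y in (x - 1/2)..(x + 1/2), (y - x) * f y
      = (∫ y in (x - 1/2)..(x + 1/2), y * f y) - x * ∫ y in (x - 1/2)..(x + 1/2), f y := by
    simp_rw [sub_mul]
    rw [intervalIntegral.integral_sub (hf.intervalIntegrable_id_mul _ _)
      ((hf.1.continuous.intervalIntegrable _ _).const_mul x), intervalIntegral.integral_const_mul]
  rw [Phi, integral_saw_mul_eq hf.2.1, hlin, hf.integral_window, mul_one]

lemma continuous_Phi (hf : PropF f) (ε : ℝ) : Continuous (Phi ε f) := by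
  have hprim : Continuous fun t => ∫ y in (0:ℝ)..t, y * f y :=
    intervalIntegral.continuous_primitive hf.intervalIntegrable_id_mul 0
  have hPhi : Phi ε f = fun x => x + ε * (((∫ y in (0:ℝ)..(x + 1/2), y * f y)
      - ∫ y in (0:ℝ)..(x - 1/2), y * f y) - x) := funext fun x => by
    rw [hf.Phi_eq, intervalIntegral.integral_interval_sub_left
      (hf.intervalIntegrable_id_mul _ _) (hf.intervalIntegrable_id_mul _ _)]
  rw [hPhi]
  have hright := hprim.comp (continuous_add_const (1/2 : ℝ))
  have hleft := hprim.comp (continuous_sub_right (1/2 : ℝ))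
  exact continuous_id.add (continuous_const.mul ((hright.sub hleft).sub continuous_id))

lemma abs_Phi_sub_le (hf : PropF f) (ε x : ℝ) : |Phi ε f x - x| ≤ |ε| / 2 := by
  obtain ⟨hlow, hupp⟩ := hf.barycenter_mem_Icc (x := x) fun y hy _ => hy
  rw [hf.Phi_eq, add_sub_cancel_left, abs_mul, div_eq_mul_one_div]
  exact mul_le_mul_of_nonneg_left (abs_le.2 ⟨by linarith, by linarith⟩) (abs_nonneg ε)

lemma surjective_Phi (hf : PropF f) (ε : ℝ) : Surjective (Phi ε f) :=
  surjective_of_continuous_of_abs_sub_le (hf.continuous_Phi ε) (hf.abs_Phi_sub_le ε)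

lemma mapsTo_Phi (hf : PropF f) {ε a b : ℝ} (hε0 : 0 ≤ ε) (hε1 : ε ≤ 1)
    (hlen : b - a < 1/2)
    (hsupp : ∀ x, f x ≠ 0 → ∃ k : ℤ, x + (k : ℝ) ∈ Icc a b) :
    MapsTo (Phi ε f) (Icc a b) (Icc a b) := by
  intro x hx
  have hwindow : ∀ y ∈ Icc (x - 1/2) (x + 1/2), f y ≠ 0 → y ∈ Icc a b := by
    intro y hy hfy
    obtain ⟨k, hk⟩ := hsupp y hfy
    -- `y` and `y + k` both lie within `1/2` of `x`, so `|k| < 1`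
    have hk0 : k = 0 := by
      have hkR : |(k : ℝ)| < 1 := by
        rw [abs_lt]
        constructor <;> linarith [hk.1, hk.2, hx.1, hx.2, hy.1, hy.2]
      exact Int.abs_lt_one_iff.1 (by exact_mod_cast hkR)
    simpa [hk0] using hk
  rw [hf.Phi_eq]
  exact (convex_Icc a b).add_smul_sub_mem hx (hf.barycenter_mem_Icc hwindow) ⟨hε0, hε1⟩

end PropF

theorem support_monotone_general (ε : ℝ) (hε0 : 0 ≤ ε) (hε1 : ε < 1)
    (f : ℝ → ℝ) (hf : PropF f)
    (a b : ℝ) (hlen : b - a < 1/2)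
    (hsupp : ∀ x, f x ≠ 0 → ∃ k : ℤ, x + (k : ℝ) ∈ Set.Icc a b) :
    Set.MapsTo (Phi ε f) (Set.Icc a b) (Set.Icc a b) ∧
    ∀ y, transfer (Phi ε f) 1 f y ≠ 0 → ∃ k : ℤ, y + (k : ℝ) ∈ Set.Icc a b := by
  have hmaps := hf.mapsTo_Phi hε0 hε1.le hlen hsupp
  refine ⟨hmaps, fun y hy => ?_⟩
  have hpre : Phi ε f (invFun (Phi ε f) y) = y := invFun_eq (hf.surjective_Phi ε y)
  obtain ⟨k, hk⟩ := hsupp _ (transfer_one_ne_zero hy)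
  refine ⟨k, ?_⟩
  rw [← hpre, ← Phi_add_intCast]
  exact hmaps hk

/-- support monotonicity of the coupling: if the support of a C¹
probability density `f` is contained (mod 1) in a closed arc `[a,b]` of length `< 1/2`,
then `Φ_f` maps `[a,b]` into itself and the support of `P_{Φ_f} f` is contained (mod 1)
in `[a,b]` as well; hence `supp*(P_{Φ_f} f) ⊆ supp*(f)`. -/
theorem support_monotone (ε : ℝ) (hε0 : 0 ≤ ε) (hε1 : ε < 1)
    (f : ℝ → ℝ) (hf : PropF f)
    (a b : ℝ) (hab : a ≤ b) (hlen : b - a < 1/2)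
    (hsupp : ∀ x, f x ≠ 0 → ∃ k : ℤ, x + (k : ℝ) ∈ Set.Icc a b) :
    Set.MapsTo (Phi ε f) (Set.Icc a b) (Set.Icc a b) ∧
    ∀ y, transfer (Phi ε f) 1 f y ≠ 0 → ∃ k : ℤ, y + (k : ℝ) ∈ Set.Icc a b :=
  support_monotone_general ε hε0 hε1 f hf a b hlen hsupp
end
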